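/- Let F be a positive-integer sequence with F_0 = 1 and let Π be the corresponding cobweb poset with unique minimal element 0. Then for any x ∈ Π of rank r ≥ 1, μ(0,x) = (-1)^r ∏_{k=1}^{r-1}(F_k - 1), and hence the r-th Whitney number of the first kind w_r(Π) = ∑_{x: rank(x)=r} μ(0,x) equals F_r · (-1)^r ∏_{k=1}^{r-1}(F_k - 1). -/

import Mathlib

/-!
Every element of positive rank lies above all elements of smaller rank, so the defining
recursion of `μ(0, x)` sums over the complete lower levels `Φ 0, …, Φ (r - 1)`. By strong
induction on the rank, `μ(0, ·)` is constant on each level, say equal to `g k` on `Φ k`, and the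
recursion becomes `g r = -∑_{k < r} F k * g k`. Subtracting consecutive instances gives
`g (r + 1) = (1 - F r) * g r` for `r ≥ 1`, with `g 1 = -1`; this is the product formula.
Summing the constant value over the `F r` elements of `Φ r` gives `w_r`.
-/

open Finset

def cobwebMobius (F : ℕ → ℕ) (r : ℕ) : ℤ :=
  (-1) ^ r * ∏ k ∈ Ico 1 r, ((F k : ℤ) - 1)

lemma cobwebMobius_succ (F : ℕ → ℕ) {n : ℕ} (hn : 1 ≤ n) :
    cobwebMobius F (n + 1) = (1 - F n) * cobwebMobius F n := by
  rw [cobwebMobius, cobwebMobius, prod_Ico_succ_top hn, pow_succ]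
  ring

lemma sum_range_mul_cobwebMobius (F : ℕ → ℕ) (hF0 : F 0 = 1) {n : ℕ} (hn : 1 ≤ n) :
    ∑ k ∈ range n, (F k : ℤ) * cobwebMobius F k = -cobwebMobius F n := by
  induction n, hn using Nat.le_induction with
  | base => simp [cobwebMobius, hF0]
  | succ n hn ih =>
    rw [sum_range_succ, ih, cobwebMobius_succ F hn]
    ring

section Graded

variable {α : Type*} {lvl : α → ℕ} {Φ : ℕ → Finset α}

lemma pairwiseDisjoint_of_mem_iff_level_eq (hΦ : ∀ (k : ℕ) (x : α), x ∈ Φ k ↔ lvl x = k)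
    (s : Set ℕ) : s.PairwiseDisjoint Φ :=
  fun i _ j _ hij => disjoint_left.2 fun z hzi hzj =>
    hij (((hΦ i z).1 hzi).symm.trans ((hΦ j z).1 hzj))

variable [PartialOrder α]

lemma le_of_forall_level_eq_zero (hord : ∀ x y : α, x < y ↔ lvl x < lvl y) {z₀ : α}
    (hz₀ : lvl z₀ = 0) (huniq : ∀ z, lvl z = 0 → z = z₀) (z : α) : z₀ ≤ z := by
  rcases Nat.eq_zero_or_pos (lvl z) with h | h
  · exact (huniq z h).ge
  · exact ((hord z₀ z).2 (hz₀ ▸ h)).le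

variable [LocallyFiniteOrder α]

lemma Ico_eq_biUnion_levels [DecidableEq α] (hord : ∀ x y : α, x < y ↔ lvl x < lvl y)
    (hΦ : ∀ (k : ℕ) (x : α), x ∈ Φ k ↔ lvl x = k) {z₀ : α} (hbot : ∀ z, z₀ ≤ z) (x : α) :
    Ico z₀ x = (range (lvl x)).biUnion Φ := by
  ext z
  simp only [mem_Ico, mem_biUnion, mem_range, hΦ, exists_eq_right', hord]
  exact and_iff_right (hbot z)

theorem mobius_eq_cobwebMobius (F : ℕ → ℕ) (hF0 : F 0 = 1)
    (hord : ∀ x y : α, x < y ↔ lvl x < lvl y)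
    (hΦ : ∀ (k : ℕ) (x : α), x ∈ Φ k ↔ lvl x = k) (hcard : ∀ k : ℕ, #(Φ k) = F k)
    (mu : α → α → ℤ) (hmu_refl : ∀ x : α, mu x x = 1)
    (hmu_rec : ∀ x y : α, x < y → mu x y = -∑ z ∈ Ico x y, mu x z)
    {z₀ : α} (hz₀ : lvl z₀ = 0) (hbot : ∀ z, z₀ ≤ z) (x : α) :
    mu z₀ x = cobwebMobius F (lvl x) := by
  classical
  induction hx : lvl x using Nat.strong_induction_on generalizing x with
  | _ r ih =>
  rcases Nat.eq_zero_or_pos r with rfl | hr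
  · obtain rfl : z₀ = x := (hbot x).eq_of_not_lt fun h => by
      have := (hord _ _).1 h
      omega
    simp [cobwebMobius, hmu_refl]
  · have hlevel : ∀ k ∈ range r, ∑ z ∈ Φ k, mu z₀ z = F k * cobwebMobius F k := fun k hk => by
      rw [sum_eq_card_nsmul fun z hz => ih k (mem_range.1 hk) z ((hΦ k z).1 hz), hcard,
        nsmul_eq_mul]
    calc mu z₀ x = -∑ z ∈ Ico z₀ x, mu z₀ z := hmu_rec _ _ ((hord _ _).2 (by omega))
      _ = -∑ k ∈ range r, ∑ z ∈ Φ k, mu z₀ z := by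
        rw [Ico_eq_biUnion_levels hord hΦ hbot, hx,
          sum_biUnion (pairwiseDisjoint_of_mem_iff_level_eq hΦ _)]
      _ = -∑ k ∈ range r, (F k : ℤ) * cobwebMobius F k := by rw [sum_congr rfl hlevel]
      _ = cobwebMobius F r := by rw [sum_range_mul_cobwebMobius F hF0 hr, neg_neg]

end Graded

theorem cobweb_whitney_first_kind_general {α : Type*} [PartialOrder α] [LocallyFiniteOrder α]
    (F : ℕ → ℕ) (hF0 : F 0 = 1)
    (lvl : α → ℕ) (Φ : ℕ → Finset α)
    (hord : ∀ x y : α, x < y ↔ lvl x < lvl y)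
    (hΦ : ∀ (k : ℕ) (x : α), x ∈ Φ k ↔ lvl x = k)
    (hcard : ∀ k : ℕ, (Φ k).card = F k)
    (mu : α → α → ℤ)
    (hmu_refl : ∀ x : α, mu x x = 1)
    (hmu_rec : ∀ x y : α, x < y → mu x y = -∑ z ∈ Finset.Ico x y, mu x z)
    (z₀ : α) (hz₀ : z₀ ∈ Φ 0)
    (r : ℕ) :
    (∀ x : α, lvl x = r →
        mu z₀ x = (-1 : ℤ) ^ r * ∏ k ∈ Finset.Ico 1 r, ((F k : ℤ) - 1)) ∧
      ∑ x ∈ Φ r, mu z₀ x =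
        (F r : ℤ) * ((-1 : ℤ) ^ r * ∏ k ∈ Finset.Ico 1 r, ((F k : ℤ) - 1)) := by
  have hlvl₀ : lvl z₀ = 0 := (hΦ 0 z₀).1 hz₀
  have huniq : ∀ z, lvl z = 0 → z = z₀ := fun z hz =>
    card_le_one.1 (by rw [hcard, hF0]) z ((hΦ 0 z).2 hz) z₀ hz₀
  have hmu : ∀ x, mu z₀ x = cobwebMobius F (lvl x) :=
    mobius_eq_cobwebMobius F hF0 hord hΦ hcard mu hmu_refl hmu_rec hlvl₀
      (le_of_forall_level_eq_zero hord hlvl₀ huniq)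
  have hmu_r : ∀ x ∈ Φ r, mu z₀ x = cobwebMobius F r := fun x hx => (hΦ r x).1 hx ▸ hmu x
  refine ⟨fun x hx => hmu_r x ((hΦ r x).2 hx), ?_⟩
  rw [sum_eq_card_nsmul hmu_r, hcard, nsmul_eq_mul, cobwebMobius]

/-- For a cobweb poset with `F 0 = 1` (unique minimal element `z₀` of rank `0`):
for every `x` of rank `r ≥ 1`, `μ(z₀,x) = (-1)^r ∏_{k=1}^{r-1}(F k - 1)`, and
hence the `r`-th Whitney number of the first kind
`w_r = ∑_{rank x = r} μ(z₀,x)` equals `F r * (-1)^r ∏_{k=1}^{r-1}(F k - 1)`. -/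
theorem cobweb_whitney_first_kind {α : Type*} [PartialOrder α] [LocallyFiniteOrder α]
    (F : ℕ → ℕ) (hF : ∀ k, 0 < F k) (hF0 : F 0 = 1)
    (lvl : α → ℕ) (Φ : ℕ → Finset α)
    (hord : ∀ x y : α, x < y ↔ lvl x < lvl y)
    (hΦ : ∀ (k : ℕ) (x : α), x ∈ Φ k ↔ lvl x = k)
    (hcard : ∀ k : ℕ, (Φ k).card = F k)
    (mu : α → α → ℤ)
    (hmu_refl : ∀ x : α, mu x x = 1)
    (hmu_rec : ∀ x y : α, x < y → mu x y = -∑ z ∈ Finset.Ico x y, mu x z)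
    (z₀ : α) (hz₀ : z₀ ∈ Φ 0)
    (r : ℕ) (hr : 1 ≤ r) :
    (∀ x : α, lvl x = r →
        mu z₀ x = (-1 : ℤ) ^ r * ∏ k ∈ Finset.Ico 1 r, ((F k : ℤ) - 1)) ∧
      ∑ x ∈ Φ r, mu z₀ x =
        (F r : ℤ) * ((-1 : ℤ) ^ r * ∏ k ∈ Finset.Ico 1 r, ((F k : ℤ) - 1)) :=
  cobweb_whitney_first_kind_general F hF0 lvl Φ hord hΦ hcard mu hmu_refl hmu_rec z₀ hz₀ r
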